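/- Let z = (α, β, M) ∈ Z with |α| < r and |β| < s. Then the following are equivalent: (a) rank(M₀(z)) = 1, ‖M₀(z)‖_n = G(z), and f₀(M − Mᵀ)·(α − β) = 0; (b) there exist vectors ᾱ, β̄ ∈ ℝ³ such that M₀(z) + ᾱ⊗β̄ = 0, (α − β)·(ᾱ × β̄) = 0 (× being the cross product on ℝ³), |ᾱ|² = s² − |β|², and |β̄|² = r² − |α|². -/

import Mathlib

open Matrix

noncomputable section

/-- Vectors in ℝ³. -/
abbrev V3 := Fin 3 → ℝ
/-- 3×3 real matrices. -/
abbrev Mat3 := Matrix (Fin 3) (Fin 3) ℝ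
/-- The state space Z = ℝ³ × ℝ³ × ℝ^{3×3}. -/
abbrev Z := V3 × V3 × Mat3

/-- Euclidean dot product on ℝ³. -/
def dot3 (u v : V3) : ℝ := ∑ i, u i * v i
/-- Euclidean norm on ℝ³. -/
def norm3 (v : V3) : ℝ := Real.sqrt (dot3 v v)
/-- Outer (tensor) product u ⊗ v. -/
def outer (u v : V3) : Mat3 := Matrix.vecMulVec u v

/-- The constraint set K_{r,s}. -/
def Krs (r s p : ℝ) : Set Z :=
  {z | z.2.2 = outer z.1 z.2.1 + p • (1 : Mat3) ∧ norm3 z.1 = r ∧ norm3 z.2.1 = s}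

/-- The wave cone Λ. -/
def waveCone : Set Z :=
  {z | ∃ (ξ : V3) (c : ℝ), ξ ≠ 0 ∧ z.2.2 *ᵥ ξ + c • z.1 = 0 ∧
    z.2.2ᵀ *ᵥ ξ + c • z.2.1 = 0 ∧ dot3 z.1 ξ = 0 ∧ dot3 z.2.1 ξ = 0}

/-- M₀(z) = α⊗β − M + p·Id. -/
def M0 (p : ℝ) (z : Z) : Mat3 := outer z.1 z.2.1 - z.2.2 + p • (1 : Mat3)

/-- G(z) = √((r² − |α|²)(s² − |β|²)). -/
def Gfun (r s : ℝ) (z : Z) : ℝ :=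
  Real.sqrt ((r ^ 2 - norm3 z.1 ^ 2) * (s ^ 2 - norm3 z.2.1 ^ 2))

/-- Iterated lamination sets K_{r,s}^{Λ,i}. -/
def lamSet (r s p : ℝ) : ℕ → Set Z
  | 0 => Krs r s p
  | (i + 1) => {z | ∃ zb ∈ waveCone, ∃ t₁ t₂ : ℝ, t₁ ≤ 0 ∧ 0 ≤ t₂ ∧
      z + t₁ • zb ∈ lamSet r s p i ∧ z + t₂ • zb ∈ lamSet r s p i}

/-- The PSD square root of a PSD matrix, as `Matrix.PosSemidef.sqrt` was defined in the older Mathlib. -/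
def psdSqrt {A : Mat3} (hA : A.PosSemidef) : Mat3 :=
  hA.1.eigenvectorUnitary.1 * diagonal ((↑) ∘ (√·) ∘ hA.1.eigenvalues) *
    (star hA.1.eigenvectorUnitary : Mat3)

/-- Nuclear norm: trace of the PSD square root of AᵀA. -/
def nuclearNorm (A : Mat3) : ℝ := (psdSqrt (Matrix.posSemidef_conjTranspose_mul_self A)).trace

/-- f₀(A) = (A₂₃, A₃₁, A₁₂) (0-indexed: (A 1 2, A 2 0, A 0 1)). -/
def f0 (A : Mat3) : V3 := ![A 1 2, A 2 0, A 0 1]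

/-- Frobenius norm of a matrix. -/
def frobNorm (A : Mat3) : ℝ := Real.sqrt (∑ i, ∑ j, A i j ^ 2)

/-- Λ-convexity of a set. -/
def LambdaConvex (S : Set Z) : Prop :=
  ∀ z₁ ∈ S, ∀ z₂ ∈ S, z₁ - z₂ ∈ waveCone →
    ∀ t : ℝ, t ∈ Set.Icc (0 : ℝ) 1 → z₁ + t • (z₂ - z₁) ∈ S

/-- The Λ-convex hull of K_{r,s}: the intersection of all Λ-convex sets containing it. -/
def lambdaHull (r s p : ℝ) : Set Z := ⋂₀ {S : Set Z | LambdaConvex S ∧ Krs r s p ⊆ S}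


/-! ### Auxiliary lemmas -/

lemma dot3_nonneg (v : V3) : 0 ≤ dot3 v v :=
  Finset.sum_nonneg fun _ _ => mul_self_nonneg _

lemma norm3_sq (v : V3) : norm3 v ^ 2 = dot3 v v := Real.sq_sqrt (dot3_nonneg v)

lemma norm3_nonneg (v : V3) : 0 ≤ norm3 v := Real.sqrt_nonneg _

lemma dot3_pos {v : V3} (hv : v ≠ 0) : 0 < dot3 v v := by
  rcases Function.ne_iff.mp hv with ⟨i, hi⟩
  simp only [Pi.zero_apply] at hi
  exact Finset.sum_pos' (fun j _ => mul_self_nonneg _)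
    ⟨i, Finset.mem_univ i, mul_self_pos.mpr hi⟩

lemma norm3_pos {v : V3} (hv : v ≠ 0) : 0 < norm3 v := Real.sqrt_pos.mpr (dot3_pos hv)

lemma mulVec_vecMulVec (u v x : V3) : vecMulVec u v *ᵥ x = dot3 v x • u := by
  ext i
  simp only [mulVec, dotProduct, vecMulVec_apply, dot3, Pi.smul_apply, smul_eq_mul,
    Fin.sum_univ_three]
  ring

lemma vecMulVec_mul_vecMulVec (u v w x : V3) :
    vecMulVec u v * vecMulVec w x = dot3 v w • vecMulVec u x := by
  ext i j
  simp only [mul_apply, vecMulVec_apply, dot3, Matrix.smul_apply, smul_eq_mul, Fin.sum_univ_three]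
  ring

lemma conjT_vecMulVec (u v : V3) : (vecMulVec u v)ᴴ = vecMulVec v u := by
  ext i j
  simp [vecMulVec_apply, mul_comm]

lemma posSemidef_smul_vecMulVec {c : ℝ} (hc : 0 ≤ c) (v : V3) :
    PosSemidef (c • vecMulVec v v) := by
  rw [posSemidef_iff_dotProduct_mulVec]
  constructor
  · unfold IsHermitian
    rw [conjTranspose_smul, conjT_vecMulVec]
    simp
  · intro x
    rw [smul_mulVec, mulVec_vecMulVec]
    have : dotProduct (star x) (c • (dot3 v x • v)) = c * (dot3 v x * dot3 v x) := by
      simp only [dotProduct, Pi.smul_apply, smul_eq_mul, star_trivial, dot3,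
        Fin.sum_univ_three]
      ring
    rw [this]
    nlinarith [mul_self_nonneg (dot3 v x), hc, mul_nonneg hc (mul_self_nonneg (dot3 v x))]

lemma trace_vecMulVec (u v : V3) : (vecMulVec u v).trace = dot3 u v := by
  simp [trace, diag, vecMulVec_apply, dot3]

open MatrixOrder in
lemma psdSqrt_eq_of_sq {A B : Mat3} (hA : A.PosSemidef) (hB : B.PosSemidef) (h : B ^ 2 = A) :
    B = psdSqrt hA := by
  have h2 := CFC.sqrt_unique (a := A) (b := B) (by rw [← sq]; exact h) hB.nonneg
  rw [CFC.sqrt_eq_cfc, cfc_nnreal_eq_real _ A hA.nonneg, hA.1.cfc_eq] at h2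
  rw [← h2, psdSqrt, IsHermitian.cfc, Unitary.conjStarAlgAut_apply, RCLike.ofReal_real_eq_id]
  have hf : (id ∘ (fun x : ℝ => ((NNReal.sqrt x.toNNReal : NNReal) : ℝ)) ∘ hA.1.eigenvalues) =
      (fun x => x) ∘ (fun x => √x) ∘ hA.1.eigenvalues := by
    funext i
    simp only [Function.comp_apply, id, Real.coe_sqrt, Real.coe_toNNReal',
      max_eq_left (hA.eigenvalues_nonneg i)]
  rw [hf]

lemma nuclearNorm_vecMulVec (u v : V3) (hu : u ≠ 0) (hv : v ≠ 0) :
    nuclearNorm (vecMulVec u v) = norm3 u * norm3 v := by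
  have hvpos := norm3_pos hv
  have hupos := norm3_pos hu
  set c : ℝ := norm3 u / norm3 v with hc
  have hcpos : 0 < c := div_pos hupos hvpos
  have hS : PosSemidef (c • vecMulVec v v) := posSemidef_smul_vecMulVec hcpos.le v
  have hsq : (c • vecMulVec v v) ^ 2 = (vecMulVec u v)ᴴ * vecMulVec u v := by
    rw [conjT_vecMulVec, vecMulVec_mul_vecMulVec, pow_two, smul_mul_smul_comm,
      vecMulVec_mul_vecMulVec, smul_smul]
    congr 1
    rw [hc]
    rw [← norm3_sq, ← norm3_sq]
    field_simp
  have := psdSqrt_eq_of_sq (Matrix.posSemidef_conjTranspose_mul_self (vecMulVec u v)) hS hsq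
  rw [nuclearNorm, ← this, trace_smul, trace_vecMulVec, ← norm3_sq]
  rw [hc]
  field_simp
  rw [smul_eq_mul, div_mul_eq_mul_div, div_eq_iff hvpos.ne']
  ring

lemma rank_vecMulVec_eq_one {u v : V3} (hu : u ≠ 0) (hv : v ≠ 0) :
    (vecMulVec u v).rank = 1 := by
  have hle : (vecMulVec u v).rank ≤ 1 := by
    rw [Matrix.rank]
    have hsub : LinearMap.range (vecMulVec u v).mulVecLin ≤ Submodule.span ℝ {u} := by
      rintro y ⟨x, rfl⟩
      rw [mulVecLin_apply, mulVec_vecMulVec]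
      exact Submodule.smul_mem _ _ (Submodule.mem_span_singleton_self u)
    calc Module.finrank ℝ (LinearMap.range (vecMulVec u v).mulVecLin)
        ≤ Module.finrank ℝ (Submodule.span ℝ {u}) := Submodule.finrank_mono hsub
      _ = 1 := finrank_span_singleton hu
  have hge : 1 ≤ (vecMulVec u v).rank := by
    rw [Matrix.rank]
    rw [Nat.one_le_iff_ne_zero, ← Nat.pos_iff_ne_zero]
    rw [Module.finrank_pos_iff_exists_ne_zero]
    refine ⟨⟨u, ⟨(dot3 v v)⁻¹ • v, ?_⟩⟩, ?_⟩
    · rw [mulVecLin_apply, mulVec_smul, mulVec_vecMulVec, smul_smul,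
        inv_mul_cancel₀ (dot3_pos hv).ne', one_smul]
    · intro h0
      exact hu (by simpa using congrArg Subtype.val h0)
  omega

lemma rank_one_decomp {A : Mat3} (h : A.rank = 1) :
    ∃ u v : V3, u ≠ 0 ∧ v ≠ 0 ∧ A = vecMulVec u v := by
  rw [Matrix.rank] at h
  obtain ⟨w, hw0, hw⟩ := finrank_eq_one_iff'.mp h
  set u : V3 := (w : V3) with hu
  have hune : u ≠ 0 := fun h0 => hw0 (Subtype.ext h0)
  have hcol : ∀ j : Fin 3, ∃ c : ℝ, A *ᵥ Pi.single j 1 = c • u := by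
    intro j
    obtain ⟨c, hc⟩ := hw ⟨A *ᵥ Pi.single j 1, ⟨Pi.single j 1, rfl⟩⟩
    exact ⟨c, by simpa using congrArg Subtype.val hc.symm⟩
  choose v hvdef using hcol
  refine ⟨u, v, hune, ?_, ?_⟩
  · intro hv0
    have hA0 : A = 0 := by
      ext i j
      have := congrFun (hvdef j) i
      simp only [mulVec_single, mul_one, hv0, Pi.zero_apply, zero_smul] at this
      simpa using this
    rw [hA0] at h
    rw [show (0 : Mat3).mulVecLin = 0 by simp, LinearMap.range_zero] at h
    simp at h
  · ext i j
    have := congrFun (hvdef j) i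
    simp only [mulVec_single, mul_one, Pi.smul_apply, smul_eq_mul, MulOpposite.op_one, one_smul,
      Matrix.col_apply] at this
    rw [vecMulVec_apply, this, mul_comm]

lemma keycalc (α β u v w : V3) (p : ℝ) (M : Mat3)
    (h : vecMulVec α β - M + p • (1 : Mat3) = vecMulVec u v) :
    dot3 (f0 (M - Mᵀ)) w = dot3 (crossProduct α β) w - dot3 (crossProduct u v) w := by
  have e : ∀ i j : Fin 3, α i * β j - M i j + p * (if i = j then 1 else 0) = u i * v j := by
    intro i j
    have := congrFun (congrFun h i) j
    simpa [Matrix.sub_apply, Matrix.add_apply, Matrix.smul_apply, vecMulVec_apply, one_apply] using this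
  have h12 := e 1 2; have h21 := e 2 1
  have h20 := e 2 0; have h02 := e 0 2
  have h01 := e 0 1; have h10 := e 1 0
  simp only [Fin.reduceEq, reduceIte, if_false, mul_zero, add_zero] at h12 h21 h20 h02 h01 h10
  simp only [f0, dot3, cross_apply, Fin.sum_univ_three, Matrix.sub_apply, transpose_apply,
    Matrix.cons_val_zero, Matrix.cons_val_one, Matrix.head_cons, Matrix.cons_val_two,
    Matrix.tail_cons]
  linear_combination (-w 0) * h12 + w 0 * h21 + (-w 1) * h20 + w 1 * h02 + (-w 2) * h01 +
    w 2 * h10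

lemma dot3_cross_self (α β : V3) : dot3 (crossProduct α β) (α - β) = 0 := by
  simp only [dot3, cross_apply, Fin.sum_univ_three, Pi.sub_apply, Matrix.cons_val_zero,
    Matrix.cons_val_one, Matrix.head_cons, Matrix.cons_val_two, Matrix.tail_cons]
  ring

lemma dot3_comm (u v : V3) : dot3 u v = dot3 v u := by
  simp [dot3, mul_comm]

lemma cond_iff (p : ℝ) (z : Z) (u v : V3) (h : M0 p z = vecMulVec u v) :
    dot3 (f0 (z.2.2 - z.2.2ᵀ)) (z.1 - z.2.1) = - dot3 (z.1 - z.2.1) (crossProduct u v) := by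
  have h' : vecMulVec z.1 z.2.1 - z.2.2 + p • (1 : Mat3) = vecMulVec u v := h
  rw [keycalc z.1 z.2.1 u v (z.1 - z.2.1) p z.2.2 h', dot3_cross_self,
    dot3_comm (crossProduct u v)]
  ring

lemma dot3_smul (c : ℝ) (x : V3) : dot3 (c • x) (c • x) = c ^ 2 * dot3 x x := by
  simp only [dot3, Pi.smul_apply, smul_eq_mul, Fin.sum_univ_three]; ring

lemma dot3_neg (x : V3) : dot3 (-x) (-x) = dot3 x x := by
  simp only [dot3, Pi.neg_apply, neg_mul_neg]

lemma norm3_neg (x : V3) : norm3 (-x) = norm3 x := by rw [norm3, dot3_neg, norm3]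

lemma ne_zero_of_dot3_pos {x : V3} (h : 0 < dot3 x x) : x ≠ 0 := by
  rintro rfl; simp [dot3] at h

lemma cross_smul_smul (c d : ℝ) (x y : V3) :
    crossProduct (c • x) (d • y) = (c * d) • crossProduct x y := by
  simp [_root_.map_smul, LinearMap.smul_apply, smul_smul, mul_comm]

lemma cross_neg_left (x y : V3) : crossProduct (-x) y = -crossProduct x y := by
  simp [map_neg]

lemma dot3_smul_right (w : V3) (c : ℝ) (q : V3) : dot3 w (c • q) = c * dot3 w q := by
  simp only [dot3, Pi.smul_apply, smul_eq_mul, Fin.sum_univ_three]; ring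

lemma dot3_neg_right (w q : V3) : dot3 w (-q) = - dot3 w q := by
  simp only [dot3, Pi.neg_apply, Fin.sum_univ_three]; ring

theorem stmt14 (r s p : ℝ) (hr : 0 < r) (hs : 0 < s) (z : Z)
    (hα : norm3 z.1 < r) (hβ : norm3 z.2.1 < s) :
    ((M0 p z).rank = 1 ∧ nuclearNorm (M0 p z) = Gfun r s z ∧
        dot3 (f0 (z.2.2 - z.2.2ᵀ)) (z.1 - z.2.1) = 0) ↔
      ∃ a b : V3,
        M0 p z + outer a b = 0 ∧
        dot3 (z.1 - z.2.1) (crossProduct a b) = 0 ∧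
        norm3 a ^ 2 = s ^ 2 - norm3 z.2.1 ^ 2 ∧
        norm3 b ^ 2 = r ^ 2 - norm3 z.1 ^ 2 := by
  have hα2 : 0 < r ^ 2 - norm3 z.1 ^ 2 := by nlinarith [norm3_nonneg z.1]
  have hβ2 : 0 < s ^ 2 - norm3 z.2.1 ^ 2 := by nlinarith [norm3_nonneg z.2.1]
  constructor
  · rintro ⟨hrank, hnn, hf0⟩
    obtain ⟨u, v, hu, hv, hN⟩ := rank_one_decomp hrank
    have hnupos := norm3_pos hu
    have hnvpos := norm3_pos hv
    have hG : norm3 u * norm3 v = Gfun r s z := by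
      rw [← hnn, hN, nuclearNorm_vecMulVec u v hu hv]
    set t : ℝ := Real.sqrt (s ^ 2 - norm3 z.2.1 ^ 2) / norm3 u with ht
    have htpos : 0 < t := div_pos (Real.sqrt_pos.mpr hβ2) hnupos
    refine ⟨-(t • u), t⁻¹ • v, ?_, ?_, ?_, ?_⟩
    · ext i j
      rw [hN]
      simp only [Matrix.add_apply, outer, vecMulVec_apply, Pi.neg_apply, Pi.smul_apply,
        smul_eq_mul, Matrix.zero_apply]
      field_simp
      ring
    · rw [cross_neg_left, cross_smul_smul, mul_inv_cancel₀ htpos.ne', one_smul,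
        dot3_neg_right]
      have := cond_iff p z u v hN
      rw [hf0] at this
      linarith [this]
    · rw [norm3_sq, dot3_neg, dot3_smul, ht]
      rw [div_pow, Real.sq_sqrt hβ2.le, ← norm3_sq u]
      field_simp
    · rw [norm3_sq, dot3_smul, ← norm3_sq v]
      have hG2 : (norm3 u * norm3 v) ^ 2 =
          (r ^ 2 - norm3 z.1 ^ 2) * (s ^ 2 - norm3 z.2.1 ^ 2) := by
        rw [hG, Gfun, Real.sq_sqrt (by positivity)]
      have : t ⁻¹ ^ 2 = norm3 u ^ 2 / (s ^ 2 - norm3 z.2.1 ^ 2) := by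
        rw [ht]
        rw [inv_div, div_pow, Real.sq_sqrt hβ2.le]
      rw [this]
      field_simp
      nlinarith [hG2]
  · rintro ⟨a, b, hab, hcross, hna, hnb⟩
    have ha2 : 0 < dot3 a a := by rw [← norm3_sq]; rw [hna]; exact hβ2
    have hb2 : 0 < dot3 b b := by rw [← norm3_sq]; rw [hnb]; exact hα2
    have ha : a ≠ 0 := ne_zero_of_dot3_pos ha2
    have hb : b ≠ 0 := ne_zero_of_dot3_pos hb2
    have hN : M0 p z = vecMulVec (-a) b := by
      have := eq_neg_of_add_eq_zero_left hab
      rw [this]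
      ext i j
      simp only [outer, Pi.neg_apply, Matrix.neg_apply, vecMulVec_apply]
      ring
    have hna' : norm3 a = Real.sqrt (s ^ 2 - norm3 z.2.1 ^ 2) := by
      rw [← hna, Real.sqrt_sq (norm3_nonneg a)]
    have hnb' : norm3 b = Real.sqrt (r ^ 2 - norm3 z.1 ^ 2) := by
      rw [← hnb, Real.sqrt_sq (norm3_nonneg b)]
    refine ⟨by rw [hN]; exact rank_vecMulVec_eq_one (neg_ne_zero.mpr ha) hb, ?_, ?_⟩
    · rw [hN, nuclearNorm_vecMulVec _ _ (neg_ne_zero.mpr ha) hb, norm3_neg, hna', hnb',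
        Gfun, ← Real.sqrt_mul hβ2.le]
      congr 1
      ring
    · rw [cond_iff p z (-a) b hN, cross_neg_left, dot3_neg_right, hcross]
      ring
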